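/- Under the standing hypotheses, for every y ∈ 𝒢₀ the family γ = (γ_z)_{z∈𝒢₀} with γ_z = τ_z τ_y⁻¹ is a transversal in 𝒢 for y satisfying the group-type condition, and the rings S_x^{α_{𝒢(x)}} and S_y^{α_{𝒢(y)}} are isomorphic, where α_{𝒢(y)} = (S_g, α_g)_{g∈𝒢(y)} is the restriction of α to the isotropy group 𝒢(y) acting partially on S_y. -/

import Mathlib

open CategoryTheory

namespace PaperGalois

/-- A unital partial action of a groupoid (with object/morphism data given by a
`CategoryTheory.Groupoid` structure on `Obj`) on a commutative ring `S`.
For a morphism `g : a ⟶ b` (source `a`, target `b`), `e g` is the central idempotent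
with `S_g = S • e g`, and `act g s` encodes `α_g(s · 1_{g⁻¹})`. -/
structure UPA (Obj : Type*) [Groupoid Obj] (S : Type*) [CommRing S] where
  e : ∀ ⦃a b : Obj⦄, (a ⟶ b) → S
  act : ∀ ⦃a b : Obj⦄, (a ⟶ b) → S → S
  idem : ∀ ⦃a b : Obj⦄ (g : a ⟶ b), e g * e g = e g
  e_le : ∀ ⦃a b : Obj⦄ (g : a ⟶ b), e g * e (𝟙 b) = e g
  act_proj : ∀ ⦃a b : Obj⦄ (g : a ⟶ b) (s : S), act g (s * e (Groupoid.inv g)) = act g s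
  act_mem : ∀ ⦃a b : Obj⦄ (g : a ⟶ b) (s : S), act g s * e g = act g s
  act_add : ∀ ⦃a b : Obj⦄ (g : a ⟶ b) (s t : S), act g (s + t) = act g s + act g t
  act_mul : ∀ ⦃a b : Obj⦄ (g : a ⟶ b) (s t : S), act g (s * t) = act g s * act g t
  act_unit : ∀ ⦃a b : Obj⦄ (g : a ⟶ b), act g (e (Groupoid.inv g)) = e g
  act_id : ∀ (a : Obj) (s : S), act (𝟙 a) s = s * e (𝟙 a)
  act_inv : ∀ ⦃a b : Obj⦄ (g : a ⟶ b) (s : S),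
      act (Groupoid.inv g) (act g s) = s * e (Groupoid.inv g)
  act_comp : ∀ ⦃a b c : Obj⦄ (h : a ⟶ b) (g : b ⟶ c) (s : S),
      act g (act h s) = act (h ≫ g) s * e g

namespace UPA

variable {Obj : Type*} [Groupoid Obj] {S : Type*} [CommRing S] (α : UPA Obj S)

lemma act_zero ⦃a b : Obj⦄ (g : a ⟶ b) : α.act g 0 = 0 := by
  have h := α.act_add g 0 0
  rw [add_zero] at h
  exact (left_eq_add.mp h)

lemma act_neg ⦃a b : Obj⦄ (g : a ⟶ b) (s : S) : α.act g (-s) = -(α.act g s) := by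
  have h := α.act_add g s (-s)
  rw [add_neg_cancel, α.act_zero] at h
  exact (eq_neg_of_add_eq_zero_right h.symm)

lemma act_one ⦃a b : Obj⦄ (g : a ⟶ b) : α.act g 1 = α.e g := by
  have h := α.act_proj g 1
  rw [one_mul, α.act_unit] at h
  exact h.symm

lemma act_e_src ⦃a b : Obj⦄ (g : a ⟶ b) : α.act g (α.e (𝟙 a)) = α.e g := by
  have h1 : α.e (𝟙 a) * α.e (Groupoid.inv g) = α.e (Groupoid.inv g) := by
    rw [mul_comm]; exact α.e_le (Groupoid.inv g)
  have h2 := α.act_proj g (α.e (𝟙 a))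
  rw [h1, α.act_unit] at h2
  exact h2.symm

/-- The set of `α`-invariant elements of `S` relative to a subgroupoid `H`:
`S^{α_H} = {s ∈ S : α_h(s·1_{h⁻¹}) = s·1_h for all h ∈ H}`. -/
def invSet (H : Subgroupoid Obj) : Set S :=
  {s : S | ∀ ⦃a b : Obj⦄ (h : a ⟶ b), h ∈ H.arrows a b → α.act h s = s * α.e h}

/-- The invariants `S_y^{α_A}` of the corner ring `S_y = S·1_y` under a set `A`
of loops at `y`. -/
def grpInvSet (y : Obj) (A : Set (y ⟶ y)) : Set S :=
  {s : S | s * α.e (𝟙 y) = s ∧ ∀ g ∈ A, α.act g s = s * α.e g}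

/-- The arrows `a ⟶ b` of the groupoid acting trivially on the subset `T ⊆ S`;
for `T` a subring this gives `𝒢_T`. -/
def fixingSet (T : Set S) (a b : Obj) : Set (a ⟶ b) :=
  {g : a ⟶ b | ∀ t ∈ T, α.act g t = t * α.e g}

/-- `⊕_{y ∈ Z} S_y`, the part of `S` supported on a set `Z` of objects. -/
def partSet (Z : Set Obj) : Set S :=
  {s : S | ∀ y : Obj, y ∉ Z → s * α.e (𝟙 y) = 0}

/-- `T·1_y ⊆ S_y` for a subset `T ⊆ S`. -/
def cornerSet (T : Set S) (y : Obj) : Set S :=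
  (fun t => t * α.e (𝟙 y)) '' T

/-- `T' ⊆ S_y` is `α_{𝒢(y,z)}`-strong. -/
def strongAt (T' : Set S) (a b : Obj) : Prop :=
  ∀ g h : a ⟶ b, (h ≫ Groupoid.inv g) ∉ α.fixingSet T' a a →
    ∀ f : S, f * f = f → f ≠ 0 → (f * α.e g = f ∨ f * α.e h = f) →
      ∃ t ∈ T', α.act g t * f ≠ α.act h t * f

/-- `T ⊆ S` is `α`-strong. -/
def IsStrong (T : Set S) : Prop :=
  ∀ a b : Obj, α.strongAt (α.cornerSet T a) a b

/-- Existence of a partial Galois coordinate system for the restriction of `α` to the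
subgroupoid `H` acting on `S_H ⊆ S` (for `H = ⊤`, `Sub = univ` this says that
`S^{α_𝒢} ⊆ S` is an `α_𝒢`-partial Galois extension). -/
def IsGaloisCoordSystem (H : Subgroupoid Obj) (Sub : Set S) : Prop :=
  ∃ (m : ℕ) (av bv : Fin m → S),
    (∀ i, av i ∈ Sub) ∧ (∀ i, bv i ∈ Sub) ∧
    (∀ ⦃a b : Obj⦄ (g : a ⟶ b), g ∈ H.arrows a b → a ≠ b →
        ∑ i, av i * α.act g (bv i) = 0) ∧
    (∀ (a : Obj) (g : a ⟶ a), g ∈ H.arrows a a → g ≠ 𝟙 a →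
        ∑ i, av i * α.act g (bv i) = 0) ∧
    (∀ a : Obj, a ∈ H.objs → ∑ i, av i * α.act (𝟙 a) (bv i) = α.e (𝟙 a))

/-- Group-type condition for the restriction of `α` to `H`, at the base object `u`:
there is a transversal (inside `H`) from `u` to every object of the `H`-component of `u`
whose ideals are as large as possible. -/
def IsGroupTypeAt (H : Subgroupoid Obj) (u : Obj) : Prop :=
  ∃ σ : ∀ v : Obj, (H.arrows u v).Nonempty → (u ⟶ v),
    (∀ v hv, σ v hv ∈ H.arrows u v) ∧
    (∀ h, σ u h = 𝟙 u) ∧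
    (∀ v hv, α.e (Groupoid.inv (σ v hv)) = α.e (𝟙 u) ∧ α.e (σ v hv) = α.e (𝟙 v))

/-- The restriction `α_H` of `α` to the subgroupoid `H` is of group-type. -/
def IsGroupType (H : Subgroupoid Obj) : Prop :=
  ∀ u ∈ H.objs, α.IsGroupTypeAt H u

end UPA

structure SubCorner (S : Type*) [CommRing S] where
  carrier : Set S
  unit : S
  unit_mem : unit ∈ carrier
  mul_unit : ∀ s ∈ carrier, s * unit = s
  add_mem : ∀ ⦃s t : S⦄, s ∈ carrier → t ∈ carrier → s + t ∈ carrier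
  mul_mem : ∀ ⦃s t : S⦄, s ∈ carrier → t ∈ carrier → s * t ∈ carrier
  neg_mem : ∀ ⦃s : S⦄, s ∈ carrier → -s ∈ carrier
  zero_mem : (0 : S) ∈ carrier

namespace SubCorner

variable {S : Type*} [CommRing S]

lemma nsmul_mem (P : SubCorner S) (n : ℕ) {s : S} (hs : s ∈ P.carrier) :
    n • s ∈ P.carrier := by
  induction n with
  | zero => simpa using P.zero_mem
  | succ n ih => rw [succ_nsmul]; exact P.add_mem ih hs

lemma zsmul_mem (P : SubCorner S) (n : ℤ) {s : S} (hs : s ∈ P.carrier) :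
    n • s ∈ P.carrier := by
  cases n with
  | ofNat n => simpa [natCast_zsmul] using P.nsmul_mem n hs
  | negSucc n => rw [negSucc_zsmul]; exact P.neg_mem (P.nsmul_mem (n+1) hs)

instance (P : SubCorner S) : CommRing ↥P.carrier where
  add a b := ⟨a.1 + b.1, P.add_mem a.2 b.2⟩
  mul a b := ⟨a.1 * b.1, P.mul_mem a.2 b.2⟩
  neg a := ⟨-a.1, P.neg_mem a.2⟩
  zero := ⟨0, P.zero_mem⟩
  one := ⟨P.unit, P.unit_mem⟩
  add_assoc a b c := Subtype.ext (add_assoc _ _ _)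
  zero_add a := Subtype.ext (zero_add _)
  add_zero a := Subtype.ext (add_zero _)
  add_comm a b := Subtype.ext (add_comm _ _)
  mul_assoc a b c := Subtype.ext (mul_assoc _ _ _)
  one_mul a := Subtype.ext (by
    show P.unit * a.1 = a.1
    rw [mul_comm]; exact P.mul_unit a.1 a.2)
  mul_one a := Subtype.ext (P.mul_unit a.1 a.2)
  left_distrib a b c := Subtype.ext (left_distrib _ _ _)
  right_distrib a b c := Subtype.ext (right_distrib _ _ _)
  mul_comm a b := Subtype.ext (mul_comm _ _)
  zero_mul a := Subtype.ext (zero_mul _)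
  mul_zero a := Subtype.ext (mul_zero _)
  neg_add_cancel a := Subtype.ext (neg_add_cancel _)
  nsmul n a := ⟨n • a.1, P.nsmul_mem n a.2⟩
  nsmul_zero a := Subtype.ext (zero_nsmul _)
  nsmul_succ n a := Subtype.ext (succ_nsmul _ _)
  zsmul n a := ⟨n • a.1, P.zsmul_mem n a.2⟩
  zsmul_zero' a := Subtype.ext (zero_zsmul _)
  zsmul_succ' n a := Subtype.ext (by
    show ((n.succ : ℤ)) • a.1 = (n : ℤ) • a.1 + a.1
    rw [Int.natCast_succ, add_zsmul, one_zsmul])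
  zsmul_neg' n a := Subtype.ext (by
    show (Int.negSucc n) • a.1 = -(((n.succ : ℤ)) • a.1)
    rw [negSucc_zsmul]
    norm_cast)

def incl {P Q : SubCorner S} (hle : P.carrier ⊆ Q.carrier) (hu : P.unit = Q.unit) :
    ↥P.carrier →+* ↥Q.carrier where
  toFun a := ⟨a.1, hle a.2⟩
  map_one' := Subtype.ext hu
  map_mul' _ _ := rfl
  map_zero' := rfl
  map_add' _ _ := rfl

def IsSepExt (P Q : SubCorner S) (hle : P.carrier ⊆ Q.carrier) (hu : P.unit = Q.unit) : Prop :=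
  letI : Algebra ↥P.carrier ↥Q.carrier := (incl hle hu).toAlgebra
  ∃ ε : TensorProduct ↥P.carrier ↥Q.carrier ↥Q.carrier,
    (∀ t : ↥Q.carrier,
        (TensorProduct.tmul ↥P.carrier t (1 : ↥Q.carrier)) * ε
          = ε * (TensorProduct.tmul ↥P.carrier (1 : ↥Q.carrier) t)) ∧
    LinearMap.mul' ↥P.carrier ↥Q.carrier ε = 1

end SubCorner

/-- A `Subring` of `S`, seen as a corner subring with identity `1`. -/
def Subring.toSC {S : Type*} [CommRing S] (T : Subring S) : SubCorner S where
  carrier := (T : Set S)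
  unit := 1
  unit_mem := T.one_mem
  mul_unit := fun s _ => mul_one s
  add_mem := fun _ _ hs ht => T.add_mem hs ht
  mul_mem := fun _ _ hs ht => T.mul_mem hs ht
  neg_mem := fun _ hs => T.neg_mem hs
  zero_mem := T.zero_mem

namespace UPA

variable {Obj : Type*} [Groupoid Obj] {S : Type*} [CommRing S] (α : UPA Obj S)

lemma invSet_one_mem (H : Subgroupoid Obj) : (1 : S) ∈ α.invSet H :=
  fun _ _ h _ => by rw [α.act_one h, one_mul]

lemma invSet_zero_mem (H : Subgroupoid Obj) : (0 : S) ∈ α.invSet H :=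
  fun _ _ h _ => by rw [α.act_zero h, zero_mul]

lemma invSet_add_mem (H : Subgroupoid Obj) {s t : S} (hs : s ∈ α.invSet H)
    (ht : t ∈ α.invSet H) : s + t ∈ α.invSet H :=
  fun _ _ h hH => by rw [α.act_add h, hs h hH, ht h hH, add_mul]

lemma invSet_mul_mem (H : Subgroupoid Obj) {s t : S} (hs : s ∈ α.invSet H)
    (ht : t ∈ α.invSet H) : s * t ∈ α.invSet H :=
  fun _ _ h hH => by
    rw [α.act_mul h, hs h hH, ht h hH, mul_mul_mul_comm, α.idem h]

lemma invSet_neg_mem (H : Subgroupoid Obj) {s : S} (hs : s ∈ α.invSet H) :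
    -s ∈ α.invSet H :=
  fun _ _ h hH => by rw [α.act_neg h, hs h hH, neg_mul]

/-- The subring of invariants `S^{α_H}` of `S`, a genuine unital subring of `S`. -/
def invariantsSubring (H : Subgroupoid Obj) : Subring S where
  carrier := α.invSet H
  one_mem' := α.invSet_one_mem H
  zero_mem' := α.invSet_zero_mem H
  add_mem' := α.invSet_add_mem H
  mul_mem' := α.invSet_mul_mem H
  neg_mem' := α.invSet_neg_mem H

/-- `S^{α_H}` as a corner subring of `S` (with identity `1`). -/
def invariantsSC (H : Subgroupoid Obj) : SubCorner S where
  carrier := α.invSet H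
  unit := 1
  unit_mem := α.invSet_one_mem H
  mul_unit := fun s _ => mul_one s
  add_mem := fun _ _ hs ht => α.invSet_add_mem H hs ht
  mul_mem := fun _ _ hs ht => α.invSet_mul_mem H hs ht
  neg_mem := fun _ hs => α.invSet_neg_mem H hs
  zero_mem := α.invSet_zero_mem H

lemma grpInvSet_unit_mem (y : Obj) (A : Set (y ⟶ y)) :
    α.e (𝟙 y) ∈ α.grpInvSet y A := by
  refine ⟨α.idem (𝟙 y), fun g _ => ?_⟩
  rw [α.act_e_src g]
  have : α.e (𝟙 y) * α.e g = α.e g := by rw [mul_comm]; exact α.e_le g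
  rw [this]

/-- `S_y^{α_A}` as a corner subring of `S` (with identity `1_y`). -/
def grpInvSC (y : Obj) (A : Set (y ⟶ y)) : SubCorner S where
  carrier := α.grpInvSet y A
  unit := α.e (𝟙 y)
  unit_mem := α.grpInvSet_unit_mem y A
  mul_unit := fun _ hs => hs.1
  add_mem := fun s t hs ht =>
    ⟨by rw [add_mul, hs.1, ht.1], fun g hg => by
      rw [α.act_add g, hs.2 g hg, ht.2 g hg, add_mul]⟩
  mul_mem := fun s t hs ht =>
    ⟨by rw [mul_assoc, ht.1], fun g hg => by
      rw [α.act_mul g, hs.2 g hg, ht.2 g hg, mul_mul_mul_comm, α.idem g]⟩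
  neg_mem := fun s hs =>
    ⟨by rw [neg_mul, hs.1], fun g hg => by rw [α.act_neg g, hs.2 g hg, neg_mul]⟩
  zero_mem := ⟨zero_mul _, fun g _ => by rw [α.act_zero g, zero_mul]⟩

lemma invSet_le (H : Subgroupoid Obj) :
    α.invSet (Subgroupoid.full (Set.univ : Set Obj)) ⊆ α.invSet H :=
  fun _ hs _ _ h _ => hs h ⟨trivial, trivial⟩

lemma invSet_le_subring {T : Subring S}
    (h : ∀ s ∈ α.invSet (Subgroupoid.full (Set.univ : Set Obj)), s ∈ T) :
    (α.invariantsSC (Subgroupoid.full (Set.univ : Set Obj))).carrier ⊆ (Subring.toSC T).carrier :=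
  h

lemma grpInvSet_le (y : Obj) (A : Set (y ⟶ y)) :
    α.grpInvSet y (Set.univ : Set (y ⟶ y)) ⊆ α.grpInvSet y A :=
  fun _ hs => ⟨hs.1, fun g _ => hs.2 g trivial⟩

end UPA

namespace UPA

variable {Obj : Type*} [Groupoid Obj] {S : Type*} [CommRing S] (α : UPA Obj S)

lemma e_id_mul ⦃a b : Obj⦄ (g : a ⟶ b) : α.e (𝟙 b) * α.e g = α.e g := by
  rw [mul_comm, α.e_le]

lemma act_e ⦃a b c : Obj⦄ (h : a ⟶ b) (g : b ⟶ c) :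
    α.act g (α.e h) = α.e (h ≫ g) * α.e g := by
  rw [← α.act_one h, α.act_comp, α.act_one]

/-- `S_{g⁻¹} = S_{s(g)}` and `S_g = S_{t(g)}`, the condition imposed on the arrows of a
group-type transversal. -/
def IsFull ⦃a b : Obj⦄ (g : a ⟶ b) : Prop :=
  α.e (Groupoid.inv g) = α.e (𝟙 a) ∧ α.e g = α.e (𝟙 b)

variable {α}

lemma e_comp_eq_e_id ⦃a b c : Obj⦄ {f : a ⟶ b} {g : b ⟶ c}
    (hf : α.e f = α.e (𝟙 b)) (hg : α.e g = α.e (𝟙 c)) : α.e (f ≫ g) = α.e (𝟙 c) := by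
  have h := α.act_e f g
  rw [hf, α.act_e_src, hg, α.e_le] at h
  exact h.symm

lemma IsFull.inv ⦃a b : Obj⦄ {g : a ⟶ b} (hg : α.IsFull g) : α.IsFull (Groupoid.inv g) := by
  simpa only [IsFull, Groupoid.inv_eq_inv, IsIso.inv_inv] using hg.symm

lemma IsFull.comp ⦃a b c : Obj⦄ {f : a ⟶ b} {g : b ⟶ c} (hf : α.IsFull f)
    (hg : α.IsFull g) : α.IsFull (f ≫ g) := by
  have hinv : Groupoid.inv (f ≫ g) = Groupoid.inv g ≫ Groupoid.inv f := by simp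
  exact ⟨hinv ▸ e_comp_eq_e_id hg.inv.2 hf.inv.2, e_comp_eq_e_id hf.2 hg.2⟩

/-- Conjugating a loop `g` at `z` back along `σ` to the loop `σ ≫ g ≫ σ⁻¹` at `y` turns
`α_𝒢(y)`-invariance of `a` into `α_𝒢(z)`-invariance of `α_σ(a)`. -/
lemma mapsTo_act_grpInvSet ⦃y z : Obj⦄ {σ : y ⟶ z} (hσ : α.e σ = α.e (𝟙 z)) :
    Set.MapsTo (α.act σ) (α.grpInvSet y Set.univ) (α.grpInvSet z Set.univ) := by
  intro a ha
  refine ⟨by rw [← hσ, α.act_mem], fun g _ => ?_⟩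
  set k : y ⟶ y := σ ≫ g ≫ Groupoid.inv σ
  have hk : k ≫ σ = σ ≫ g := by simp [k]
  have hconj : α.act (σ ≫ g) a * α.e σ = α.act σ a * α.e (σ ≫ g) * α.e σ := by
    have h := α.act_comp k σ a
    rw [ha.2 k trivial, α.act_mul, α.act_e, hk] at h
    rw [← h, mul_assoc]
  have hσg : α.e (σ ≫ g) * α.e g = α.e g := by
    rw [← α.act_e, hσ, α.act_e_src]
  calc α.act g (α.act σ a)
      = α.act (σ ≫ g) a * α.e σ * α.e g := by
        rw [α.act_comp, mul_assoc, hσ, α.e_id_mul]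
    _ = α.act σ a * (α.e (σ ≫ g) * (α.e σ * α.e g)) := by rw [hconj]; ring
    _ = α.act σ a * α.e g := by rw [hσ, α.e_id_mul, hσg]

lemma bijOn_act_grpInvSet ⦃y z : Obj⦄ {σ : y ⟶ z} (hσ : α.IsFull σ) :
    Set.BijOn (α.act σ) (α.grpInvSet y Set.univ) (α.grpInvSet z Set.univ) := by
  refine Set.InvOn.bijOn (f' := α.act (Groupoid.inv σ)) ⟨fun a ha => ?_, fun b hb => ?_⟩
    (mapsTo_act_grpInvSet hσ.2) (mapsTo_act_grpInvSet hσ.inv.2)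
  · rw [α.act_inv, hσ.1, ha.1]
  · have h := α.act_inv (Groupoid.inv σ) b
    rwa [hσ.inv.1, hb.1, show Groupoid.inv (Groupoid.inv σ) = σ by simp] at h

end UPA

/-- **Remark 3.3.**  Standing hypotheses as before.  For every `y ∈ 𝒢₀`, the family
`γ = (γ_z)_{z ∈ 𝒢₀}` with `γ_z = τ_z τ_y⁻¹` is a transversal in `𝒢` for `y` satisfying the
group-type condition, and the rings `S_x^{α_{𝒢(x)}}` and `S_y^{α_{𝒢(y)}}` are isomorphic
(an additive and multiplicative bijection between them exists). -/
theorem base_change_transversal_and_iso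
    {Obj : Type*} [Groupoid Obj] [Fintype Obj] [∀ a b : Obj, Finite (a ⟶ b)]
    {S : Type*} [CommRing S] (α : UPA Obj S)
    (hsum : ∑ y : Obj, α.e (𝟙 y) = 1)
    (horth : ∀ y z : Obj, y ≠ z → α.e (𝟙 y) * α.e (𝟙 z) = 0)
    (hconn : ∀ a b : Obj, Nonempty (a ⟶ b))
    (x : Obj) (τ : ∀ y : Obj, x ⟶ y) (hτx : τ x = 𝟙 x)
    (hgt : ∀ y : Obj, α.e (Groupoid.inv (τ y)) = α.e (𝟙 x) ∧ α.e (τ y) = α.e (𝟙 y)) :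
    ∀ y : Obj,
      ((Groupoid.inv (τ y) ≫ τ y) = 𝟙 y) ∧
      (∀ z : Obj,
        α.e (Groupoid.inv (Groupoid.inv (τ y) ≫ τ z)) = α.e (𝟙 y) ∧
        α.e (Groupoid.inv (τ y) ≫ τ z) = α.e (𝟙 z)) ∧
      (∃ f : S → S,
        Set.BijOn f (α.grpInvSet x (Set.univ : Set (x ⟶ x)))
          (α.grpInvSet y (Set.univ : Set (y ⟶ y))) ∧
        (∀ a b : S, a ∈ α.grpInvSet x (Set.univ : Set (x ⟶ x)) →
            b ∈ α.grpInvSet x (Set.univ : Set (x ⟶ x)) → f (a + b) = f a + f b) ∧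
        (∀ a b : S, a ∈ α.grpInvSet x (Set.univ : Set (x ⟶ x)) →
            b ∈ α.grpInvSet x (Set.univ : Set (x ⟶ x)) → f (a * b) = f a * f b)) := by
  intro y
  have hτ : ∀ z, α.IsFull (τ z) := hgt
  exact ⟨Groupoid.inv_comp (τ y), fun z => (hτ y).inv.comp (hτ z),
    α.act (τ y), UPA.bijOn_act_grpInvSet (hτ y),
    fun a b _ _ => α.act_add (τ y) a b, fun a b _ _ => α.act_mul (τ y) a b⟩

end PaperGalois
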